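/- Let L be a Hermitian Mackey functor and Mₙ(L) the matrix Hermitian Mackey functor. The action is compatible with the transfer: for all A, C ∈ Mₙ(L(ℤ/2)), A•T(C) = T(A·C·w(A)), where T: Mₙ(L(ℤ/2)) → Mₙ(L)(*) is the matrix transfer T(C)ᵢⱼ = Cᵢⱼ + w(Cⱼᵢ) for i<j and T(Cᵢᵢ) on the diagonal, and w(A) is the conjugate transpose. -/

import Mathlib

/-- A Hermitian ℤ/2-Mackey functor: a ring `U = L(ℤ/2)` with anti-involution `w`,
an abelian group `F = L(*)`, restriction `R`, transfer `T` with `R (T a) = a + w a`,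
and a multiplicative left action `act` of `U` on `F`. -/
structure HermitianMackey (U F : Type) [Ring U] [AddCommGroup F] where
  w : U → U
  w_add : ∀ a a' : U, w (a + a') = w a + w a'
  w_invol : ∀ a : U, w (w a) = a
  w_mul : ∀ a a' : U, w (a * a') = w a' * w a
  w_one : w 1 = 1
  R : F → U
  R_add : ∀ b b' : F, R (b + b') = R b + R b'
  R_equiv : ∀ b : F, w (R b) = R b
  T : U → F
  T_add : ∀ a a' : U, T (a + a') = T a + T a'
  T_equiv : ∀ a : U, T (w a) = T a
  RT : ∀ a : U, R (T a) = a + w a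
  act : U → F → F
  act_add : ∀ (a : U) (b b' : F), act a (b + b') = act a b + act a b'
  act_mul : ∀ (a a' : U) (b : F), act (a * a') b = act a (act a' b)
  act_one : ∀ b : F, act 1 b = b
  R_act : ∀ (a : U) (b : F), R (act a b) = a * R b * w a
  act_T : ∀ a c : U, act a (T c) = T (a * c * w a)
  add_act : ∀ (a a' : U) (b : F),
    act (a + a') b = act a b + act a' b + T (a * R b * w a')
  zero_act : ∀ b : F, act 0 b = 0

variable {U F : Type} [Ring U] [AddCommGroup F]

/-- The conjugate transpose `w(A)ᵢⱼ = w(Aⱼᵢ)`, the anti-involution of `Mₙ(L)(ℤ/2)`. -/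
def conjT (L : HermitianMackey U F) {n : ℕ} (A : Matrix (Fin n) (Fin n) U) :
    Matrix (Fin n) (Fin n) U :=
  Matrix.of fun i j => L.w (A j i)

/-- The restriction `R : Mₙ(L)(*) → Mₙ(L(ℤ/2))`. An element of `Mₙ(L)(*)` is
recorded as a pair `(Boff, Bdiag)`: the entries `Boff i j` for `i < j` lie in
`L(ℤ/2)` and the diagonal entries `Bdiag i` lie in `L(*)`; the restriction fills
in the lower entries via the involution `w`. -/
def mRest (L : HermitianMackey U F) {n : ℕ}
    (Boff : Fin n → Fin n → U) (Bdiag : Fin n → F) :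
    Matrix (Fin n) (Fin n) U :=
  Matrix.of fun i j =>
    if i < j then Boff i j else if j < i then L.w (Boff j i) else L.R (Bdiag i)

/-- Off-diagonal part of the matrix transfer `T : Mₙ(L(ℤ/2)) → Mₙ(L)(*)`:
`T(A)ᵢⱼ = Aᵢⱼ + w(Aⱼᵢ)` for `i < j`. -/
def mTransOff (L : HermitianMackey U F) {n : ℕ} (A : Matrix (Fin n) (Fin n) U) :
    Fin n → Fin n → U :=
  fun i j => A i j + L.w (A j i)

/-- Diagonal part of the matrix transfer: `T(A)ᵢᵢ = T(Aᵢᵢ)`. -/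
def mTransDiag (L : HermitianMackey U F) {n : ℕ} (A : Matrix (Fin n) (Fin n) U) :
    Fin n → F :=
  fun i => L.T (A i i)

/-- Off-diagonal part of the action of `Mₙ(L(ℤ/2))` on `Mₙ(L)(*)`:
`(A • B)ᵢⱼ = (A · R(B) · w(A))ᵢⱼ` for `i < j`. -/
def mActOff (L : HermitianMackey U F) {n : ℕ} (A : Matrix (Fin n) (Fin n) U)
    (Boff : Fin n → Fin n → U) (Bdiag : Fin n → F) : Fin n → Fin n → U :=
  fun i j => (A * mRest L Boff Bdiag * conjT L A) i j

/-- Diagonal part of the action of `Mₙ(L(ℤ/2))` on `Mₙ(L)(*)`: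
`(A • B)ᵢᵢ = T(Σ_{k<l} Aᵢₖ · R(B)ₖₗ · w(Aᵢₗ)) + Σₖ Aᵢₖ • Bₖₖ`. -/
def mActDiag (L : HermitianMackey U F) {n : ℕ} (A : Matrix (Fin n) (Fin n) U)
    (Boff : Fin n → Fin n → U) (Bdiag : Fin n → F) : Fin n → F :=
  fun i =>
    (∑ k : Fin n, ∑ l : Fin n,
        if k < l then L.T (A i k * mRest L Boff Bdiag k l * L.w (A i l)) else 0)
      + ∑ k : Fin n, L.act (A i k) (Bdiag k)

/-!
The restriction of `T(C)` is `C + w(C)`, so off the diagonal `A · R(T C) · w(A)` is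
`A C w(A) + w(A C w(A))`. On the diagonal, `T`-equivariance turns the `(k, l)` term of
`A w(C) w(A)` into the `(l, k)` term of `A C w(A)`; hence the sum over `k < l` together with the
diagonal terms `Aᵢₖ • T(Cₖₖ) = T(Aᵢₖ Cₖₖ w(Aᵢₖ))` is the full sum `T((A C w(A))ᵢᵢ)`.
-/

namespace HermitianMackey

variable (L : HermitianMackey U F)

theorem w_sum {ι : Type*} (s : Finset ι) (f : ι → U) :
    L.w (∑ i ∈ s, f i) = ∑ i ∈ s, L.w (f i) :=
  map_sum (AddMonoidHom.mk' L.w L.w_add) f s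

theorem T_sum {ι : Type*} (s : Finset ι) (f : ι → U) :
    L.T (∑ i ∈ s, f i) = ∑ i ∈ s, L.T (f i) :=
  map_sum (AddMonoidHom.mk' L.T L.T_add) f s

theorem T_mul_w_mul_w (a b c : U) : L.T (a * L.w c * L.w b) = L.T (b * c * L.w a) := by
  rw [← L.T_equiv (b * c * L.w a), L.w_mul, L.w_mul, L.w_invol, mul_assoc]

end HermitianMackey

section Matrix

variable (L : HermitianMackey U F) {n : ℕ}

@[simp]
theorem conjT_apply (A : Matrix (Fin n) (Fin n) U) (i j : Fin n) :
    conjT L A i j = L.w (A j i) :=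
  rfl

theorem conjT_mul (A B : Matrix (Fin n) (Fin n) U) :
    conjT L (A * B) = conjT L B * conjT L A := by
  ext i j
  simp only [conjT_apply, Matrix.mul_apply, L.w_sum, L.w_mul]

theorem conjT_conjT (A : Matrix (Fin n) (Fin n) U) : conjT L (conjT L A) = A := by
  ext i j
  simp only [conjT_apply, L.w_invol]

theorem conjT_mul_mul_conjT (A C : Matrix (Fin n) (Fin n) U) :
    conjT L (A * C * conjT L A) = A * conjT L C * conjT L A := by
  rw [conjT_mul, conjT_mul, conjT_conjT, Matrix.mul_assoc]

theorem mRest_mTrans (C : Matrix (Fin n) (Fin n) U) :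
    mRest L (mTransOff L C) (mTransDiag L C) = C + conjT L C := by
  ext i j
  simp only [mRest, mTransOff, mTransDiag, Matrix.of_apply, Matrix.add_apply, conjT_apply]
  rcases lt_trichotomy i j with h | rfl | h
  · simp [h]
  · simp [L.RT]
  · simp [h, h.asymm, L.w_add, L.w_invol, add_comm]

end Matrix

theorem sum_sum_ite_lt_add_swap_add_sum_diag {ι M : Type*} [Fintype ι] [LinearOrder ι]
    [AddCommMonoid M] (f : ι → ι → M) :
    (∑ k, ∑ l, if k < l then f k l + f l k else 0) + ∑ k, f k k = ∑ k, ∑ l, f k l := by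
  have hswap : (∑ k, ∑ l, if k < l then f l k else 0) = ∑ k, ∑ l, if l < k then f k l else 0 :=
    Finset.sum_comm
  have hdiag : ∑ k, f k k = ∑ k, ∑ l, if k = l then f k l else 0 := by
    simp
  simp only [ite_add_zero, Finset.sum_add_distrib]
  rw [hswap, hdiag, ← Finset.sum_add_distrib, ← Finset.sum_add_distrib]
  refine Finset.sum_congr rfl fun k _ => ?_
  rw [← Finset.sum_add_distrib, ← Finset.sum_add_distrib]
  refine Finset.sum_congr rfl fun l _ => ?_
  rcases lt_trichotomy k l with h | rfl | h
  · simp [h, h.asymm, h.ne]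
  · simp
  · simp [h, h.asymm, h.ne']

section Action

variable (L : HermitianMackey U F) {n : ℕ} (A C : Matrix (Fin n) (Fin n) U)

theorem mActOff_mTrans (i j : Fin n) :
    mActOff L A (mTransOff L C) (mTransDiag L C) i j = mTransOff L (A * C * conjT L A) i j := by
  have hconj := congrFun (congrFun (conjT_mul_mul_conjT L A C) i) j
  rw [conjT_apply] at hconj
  simp only [mActOff, mTransOff, mRest_mTrans, Matrix.mul_add, Matrix.add_mul, Matrix.add_apply,
    ← hconj]

theorem mActDiag_mTrans (i : Fin n) :
    mActDiag L A (mTransOff L C) (mTransDiag L C) i = mTransDiag L (A * C * conjT L A) i := by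
  set f : Fin n → Fin n → F := fun k l => L.T (A i k * C k l * L.w (A i l))
  have hoff : ∀ k l, L.T (A i k * (C + conjT L C) k l * L.w (A i l)) = f k l + f l k := by
    intro k l
    rw [Matrix.add_apply, mul_add, add_mul, L.T_add, conjT_apply, L.T_mul_w_mul_w]
  have hdiag : ∀ k, L.act (A i k) (L.T (C k k)) = f k k := fun k => L.act_T _ _
  calc mActDiag L A (mTransOff L C) (mTransDiag L C) i
      = (∑ k, ∑ l, if k < l then f k l + f l k else 0) + ∑ k, f k k := by
        simp only [mActDiag, mTransDiag, mRest_mTrans, hoff, hdiag]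
    _ = ∑ k, ∑ l, f k l := sum_sum_ite_lt_add_swap_add_sum_diag f
    _ = mTransDiag L (A * C * conjT L A) i := by
        simp only [f, mTransDiag, Matrix.mul_apply, conjT_apply, Finset.sum_mul, L.T_sum]
        exact Finset.sum_comm

end Action

/-- compatibility of the matrix action with the transfer:
`A • T(C) = T(A · C · w(A))`. -/
theorem matrix_action_transfer {U F : Type} [Ring U] [AddCommGroup F]
    (L : HermitianMackey U F) (n : ℕ)
    (A C : Matrix (Fin n) (Fin n) U) :
    (∀ i j : Fin n, i < j →
        mActOff L A (mTransOff L C) (mTransDiag L C) i j =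
          mTransOff L (A * C * conjT L A) i j) ∧
    (∀ i : Fin n,
        mActDiag L A (mTransOff L C) (mTransDiag L C) i =
          mTransDiag L (A * C * conjT L A) i) :=
  ⟨fun i j _ => mActOff_mTrans L A C i j, mActDiag_mTrans L A C⟩
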